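/- Let S →^i (X, H) ←^o T and S' →^{i'} (X', H') ←^{o'} T' be open Markov processes and let f : S → S', p : X → X', g : T → T' be maps such that the squares (i, f, p, i') and (o, g, p, o') commute and are pullbacks, and p_* H = H' p_*. Then for every v ∈ ℝ^X, I ∈ ℝ^S, O ∈ ℝ^T with H(v) + i_*(I) − o_*(O) = 0, one has H'(p_*(v)) + i'_*(f_*(I)) − o'_*(g_*(O)) = 0, together with f_*(i^*(v)) = i'^*(p_*(v)) and g_*(o^*(v)) = o'^*(p_*(v)). Consequently (f_* i^*(v), f_*(I), g_* o^*(v), g_*(O)) lies in the black-boxing of S' →^{i'} (X', H') ←^{o'} T'. -/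

import Mathlib

open scoped BigOperators

noncomputable section

/-- The pushforward of vectors along a map of finite sets:
`(f_* v) b = ∑_{a : f a = b} v a`. -/
def pushforward {A B : Type} [Fintype A] [DecidableEq B] (f : A → B) :
    (A → ℝ) →ₗ[ℝ] (B → ℝ) where
  toFun v := fun b => ∑ a ∈ Finset.univ.filter (fun a => f a = b), v a
  map_add' u v := by
    funext b
    simp [Finset.sum_add_distrib]
  map_smul' c v := by
    funext b
    simp [Finset.mul_sum]

/-- The pullback of vectors along a map of finite sets: `f^* v = v ∘ f`. -/
def pullback {A B : Type} (f : A → B) : (B → ℝ) →ₗ[ℝ] (A → ℝ) where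
  toFun v := v ∘ f
  map_add' _ _ := rfl
  map_smul' _ _ := rfl

/-- A probability distribution on a finite set: nonnegative components summing to 1. -/
def IsProbDist {A : Type} [Fintype A] (v : A → ℝ) : Prop :=
  (∀ a, 0 ≤ v a) ∧ ∑ a, v a = 1

/-- A linear operator is stochastic if it maps probability distributions to
probability distributions. -/
def IsStochasticOp {A B : Type} [Fintype A] [Fintype B]
    (T : (A → ℝ) →ₗ[ℝ] (B → ℝ)) : Prop :=
  ∀ v, IsProbDist v → IsProbDist (T v)

/-- An operator `H` is infinitesimal stochastic if its off-diagonal matrix entries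
`H_{ij} = (H e_j) i` are nonnegative and each column sums to zero. -/
def IsInfinitesimalStochastic {A : Type} [Fintype A] [DecidableEq A]
    (H : (A → ℝ) →ₗ[ℝ] (A → ℝ)) : Prop :=
  (∀ i j, i ≠ j → 0 ≤ H (Pi.single j 1) i) ∧ ∀ j, ∑ i, H (Pi.single j 1) i = 0

/-- A stochastic section for `p : X → X'` is a stochastic operator
`s : ℝ^{X'} → ℝ^X` with `p_* ∘ s = 1`. -/
def IsStochasticSection {X X' : Type} [Fintype X] [Fintype X'] [DecidableEq X']
    (p : X → X') (s : (X' → ℝ) →ₗ[ℝ] (X → ℝ)) : Prop :=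
  IsStochasticOp s ∧ pushforward p ∘ₗ s = LinearMap.id

/-- A matrix is stochastic if it maps probability distributions to probability
distributions. -/
def IsStochasticMat {A B : Type} [Fintype A] [Fintype B] (T : Matrix B A ℝ) : Prop :=
  ∀ v, IsProbDist v → IsProbDist (T.mulVec v)

/-- A matrix is infinitesimal stochastic if its off-diagonal entries are nonnegative
and its columns sum to zero. -/
def IsInfStochMat {A : Type} [Fintype A] (H : Matrix A A ℝ) : Prop :=
  (∀ i j, i ≠ j → 0 ≤ H i j) ∧ ∀ j, ∑ i, H i j = 0

/-- A Markov semigroup: a continuous one-parameter semigroup of stochastic matrices. -/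
def IsMarkovSemigroup {A : Type} [Fintype A] [DecidableEq A] (U : ℝ → Matrix A A ℝ) : Prop :=
  (∀ t : ℝ, 0 ≤ t → IsStochasticMat (U t)) ∧ U 0 = 1 ∧
    (∀ s t : ℝ, 0 ≤ s → 0 ≤ t → U (s + t) = U s * U t) ∧
    ∀ v : A → ℝ, ContinuousOn (fun t => (U t).mulVec v) (Set.Ici 0)

/-- The (matrix of the) pushforward along `f`. -/
def pushMat {A B : Type} [DecidableEq B] (f : A → B) : Matrix B A ℝ :=
  Matrix.of fun b a => if f a = b then 1 else 0

/-- A commuting square of maps that is a pullback: every compatible pair has a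
unique common preimage. -/
def IsPullbackSquare {A B C D : Type} (f : A → B) (g : A → C) (h : B → D) (k : C → D) : Prop :=
  (∀ a, h (f a) = k (g a)) ∧ ∀ (b : B) (c : C), h b = k c → ∃! a, f a = b ∧ g a = c

/-- A commuting square of maps satisfying the universal property of a pushout. -/
def IsPushoutSquare {T X Y Z : Type} (o : T → X) (i' : T → Y) (j : X → Z) (k : Y → Z) : Prop :=
  (∀ t, j (o t) = k (i' t)) ∧
    ∀ (W : Type) (u : X → W) (u' : Y → W), (∀ t, u (o t) = u' (i' t)) →
      ∃! w : Z → W, (∀ x, w (j x) = u x) ∧ ∀ y, w (k y) = u' y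

/-- The black-boxing of an open Markov process `S → (X,H) ← T`: the set of
steady-state boundary data `(i^* v, I, o^* v, O)`. -/
def blackBox {S X T : Type} [Fintype S] [Fintype T] [DecidableEq X]
    (i : S → X) (o : T → X) (H : (X → ℝ) →ₗ[ℝ] (X → ℝ)) :
    Set ((S → ℝ) × (S → ℝ) × (T → ℝ) × (T → ℝ)) :=
  {w | ∃ (v : X → ℝ) (I : S → ℝ) (O : T → ℝ),
    H v + pushforward i I - pushforward o O = 0 ∧
    w = (pullback i v, I, pullback o v, O)}

/-- The direct sum of two operators, under the canonical identification
`ℝ^{X ⊕ Y} ≃ ℝ^X ⊕ ℝ^Y`. -/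
def dsum {A B : Type} (H : (A → ℝ) →ₗ[ℝ] (A → ℝ)) (G : (B → ℝ) →ₗ[ℝ] (B → ℝ)) :
    (A ⊕ B → ℝ) →ₗ[ℝ] (A ⊕ B → ℝ) :=
  (LinearEquiv.sumArrowLequivProdArrow A B ℝ ℝ).symm.toLinearMap ∘ₗ
    (H.prodMap G) ∘ₗ (LinearEquiv.sumArrowLequivProdArrow A B ℝ ℝ).toLinearMap

section PushPull

variable {A B C D : Type}

lemma pushforward_apply [Fintype A] [DecidableEq B] (f : A → B) (v : A → ℝ) (b : B) :
    pushforward f v b = ∑ a ∈ Finset.univ.filter (fun a => f a = b), v a :=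
  rfl

lemma pushforward_pushforward [Fintype A] [Fintype B] [DecidableEq B] [DecidableEq C]
    (f : A → B) (g : B → C) (v : A → ℝ) :
    pushforward g (pushforward f v) = pushforward (g ∘ f) v := by
  funext c
  simp only [pushforward_apply, Function.comp_apply, Finset.sum_fiberwise_eq_sum_filter,
    Finset.mem_filter, Finset.mem_univ, true_and]

/-- Base change (Beck–Chevalley) for a pullback square `A → B → D ← C ← A`: the fibre of
`g` over `c` is carried bijectively by `f` onto the fibre of `h` over `k c`. -/
theorem IsPullbackSquare.pushforward_comp_pullback [Fintype A] [Fintype B]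
    [DecidableEq C] [DecidableEq D] {f : A → B} {g : A → C} {h : B → D} {k : C → D}
    (hsq : IsPullbackSquare f g h k) :
    pushforward g ∘ₗ pullback f = pullback k ∘ₗ pushforward h := by
  refine LinearMap.ext fun v => funext fun c => ?_
  simp only [LinearMap.comp_apply, pushforward_apply, pullback, LinearMap.coe_mk,
    AddHom.coe_mk, Function.comp_apply]
  refine Finset.sum_bij (fun a _ => f a) ?maps ?inj ?surj fun _ _ => rfl
  case maps =>
    intro a ha
    simp only [Finset.mem_filter, Finset.mem_univ, true_and] at ha ⊢
    rw [hsq.1, ha]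
  case inj =>
    intro a ha a' ha' hfa
    simp only [Finset.mem_filter, Finset.mem_univ, true_and] at ha ha'
    obtain ⟨_, -, huniq⟩ := hsq.2 (f a) c (by rw [hsq.1, ha])
    exact (huniq a ⟨rfl, ha⟩).trans (huniq a' ⟨hfa.symm, ha'⟩).symm
  case surj =>
    intro b hb
    simp only [Finset.mem_filter, Finset.mem_univ, true_and] at hb
    obtain ⟨a, ⟨hfa, hga⟩, -⟩ := hsq.2 b c hb
    exact ⟨a, by simpa using hga, hfa⟩

end PushPull

theorem pushforward_steady_state
    {S X T S' X' T' : Type} [Fintype S] [Fintype X] [Fintype T] [Fintype S'] [Fintype T']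
    [DecidableEq X] [DecidableEq X'] [DecidableEq S'] [DecidableEq T']
    {i : S → X} {o : T → X} {H : (X → ℝ) →ₗ[ℝ] (X → ℝ)}
    {i' : S' → X'} {o' : T' → X'} {H' : (X' → ℝ) →ₗ[ℝ] (X' → ℝ)}
    {f : S → S'} {p : X → X'} {g : T → T'}
    (hi : i' ∘ f = p ∘ i) (ho : o' ∘ g = p ∘ o)
    (hcomm : pushforward p ∘ₗ H = H' ∘ₗ pushforward p)
    {v : X → ℝ} {I : S → ℝ} {O : T → ℝ}
    (hsteady : H v + pushforward i I - pushforward o O = 0) :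
    H' (pushforward p v) + pushforward i' (pushforward f I)
      - pushforward o' (pushforward g O) = 0 := by
  rw [pushforward_pushforward, pushforward_pushforward, hi, ho, ← pushforward_pushforward i p,
    ← pushforward_pushforward o p, ← LinearMap.comp_apply H', ← hcomm, LinearMap.comp_apply,
    ← map_add, ← map_sub, hsteady, map_zero]

theorem morphism_preserves_steady_states_general
    {S X T S' X' T' : Type}
    [Fintype S] [Fintype X] [Fintype T] [Fintype S'] [Fintype T']
    [DecidableEq X] [DecidableEq X'] [DecidableEq S'] [DecidableEq T']
    (i : S → X) (o : T → X)
    (H : (X → ℝ) →ₗ[ℝ] (X → ℝ))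
    (i' : S' → X') (o' : T' → X')
    (H' : (X' → ℝ) →ₗ[ℝ] (X' → ℝ))
    (f : S → S') (p : X → X') (g : T → T')
    (hsq1 : IsPullbackSquare i f p i') (hsq2 : IsPullbackSquare o g p o')
    (hcomm : pushforward p ∘ₗ H = H' ∘ₗ pushforward p)
    (v : X → ℝ) (I : S → ℝ) (O : T → ℝ)
    (hsteady : H v + pushforward i I - pushforward o O = 0) :
    H' (pushforward p v) + pushforward i' (pushforward f I)
        - pushforward o' (pushforward g O) = 0 ∧
    pushforward f (pullback i v) = pullback i' (pushforward p v) ∧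
    pushforward g (pullback o v) = pullback o' (pushforward p v) ∧
    (pushforward f (pullback i v), pushforward f I,
      pushforward g (pullback o v), pushforward g O) ∈ blackBox i' o' H' := by
  have hsteady' := pushforward_steady_state (funext fun s => (hsq1.1 s).symm)
    (funext fun t => (hsq2.1 t).symm) hcomm hsteady
  have hin : pushforward f (pullback i v) = pullback i' (pushforward p v) :=
    LinearMap.congr_fun hsq1.pushforward_comp_pullback v
  have hout : pushforward g (pullback o v) = pullback o' (pushforward p v) :=
    LinearMap.congr_fun hsq2.pushforward_comp_pullback v
  exact ⟨hsteady', hin, hout, pushforward p v, pushforward f I, pushforward g O, hsteady',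
    by rw [hin, hout]⟩

/-- A morphism of open Markov processes sends steady states (with
inflows and outflows) to steady states; consequently it maps black-boxing data of the
source into the black-boxing of the target. -/
theorem morphism_preserves_steady_states
    {S X T S' X' T' : Type}
    [Fintype S] [Fintype X] [Fintype T] [Fintype S'] [Fintype X'] [Fintype T']
    [DecidableEq X] [DecidableEq X'] [DecidableEq S'] [DecidableEq T']
    (i : S → X) (o : T → X) (hi : Function.Injective i) (ho : Function.Injective o)
    (H : (X → ℝ) →ₗ[ℝ] (X → ℝ)) (hH : IsInfinitesimalStochastic H)
    (i' : S' → X') (o' : T' → X')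
    (hi' : Function.Injective i') (ho' : Function.Injective o')
    (H' : (X' → ℝ) →ₗ[ℝ] (X' → ℝ)) (hH' : IsInfinitesimalStochastic H')
    (f : S → S') (p : X → X') (g : T → T')
    (hsq1 : IsPullbackSquare i f p i') (hsq2 : IsPullbackSquare o g p o')
    (hcomm : pushforward p ∘ₗ H = H' ∘ₗ pushforward p)
    (v : X → ℝ) (I : S → ℝ) (O : T → ℝ)
    (hsteady : H v + pushforward i I - pushforward o O = 0) :
    H' (pushforward p v) + pushforward i' (pushforward f I)
        - pushforward o' (pushforward g O) = 0 ∧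
    pushforward f (pullback i v) = pullback i' (pushforward p v) ∧
    pushforward g (pullback o v) = pullback o' (pushforward p v) ∧
    (pushforward f (pullback i v), pushforward f I,
      pushforward g (pullback o v), pushforward g O) ∈ blackBox i' o' H' :=
  morphism_preserves_steady_states_general i o H i' o' H' f p g hsq1 hsq2 hcomm v I O hsteady

end
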